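/- Let f ∈ ℝ[x,y] be of degree n ≥ 3 with homogenization F and H_f the degree-(2n−4) homogenization of Hess f. With B(u,v,ω) = −uF_uv − vF_vv and S = u²F_uu + 2uvF_uv + v²F_vv, the identity F_vv·S − B² = H_f holds as polynomials in (u,v,ω) after evaluation at u = 1, i.e., F_vv(1,v,ω)·S(1,v,ω) − B(1,v,ω)² = H_f(1,v,ω). -/

import Mathlib

open MvPolynomial

/-- The Hessian determinant `f_xx f_yy - f_xy ^ 2` of a polynomial in two variables. -/
noncomputable def Hess (P : MvPolynomial (Fin 2) ℝ) : MvPolynomial (Fin 2) ℝ :=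
  pderiv 0 (pderiv 0 P) * pderiv 1 (pderiv 1 P) - (pderiv 0 (pderiv 1 P)) ^ 2

/-- The homogenization `F(u,v,ω) = Σ_{i=0}^{n} ω^{n-i} f_i(u,v)` of a polynomial of degree `n`. -/
noncomputable def homog3 (f : MvPolynomial (Fin 2) ℝ) (n : ℕ) : MvPolynomial (Fin 3) ℝ :=
  ∑ i ∈ Finset.range (n + 1),
    X 2 ^ (n - i) * rename (Fin.castSucc : Fin 2 → Fin 3) (homogeneousComponent i f)

noncomputable def Fuu (F : MvPolynomial (Fin 3) ℝ) : MvPolynomial (Fin 3) ℝ :=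
  pderiv 0 (pderiv 0 F)
noncomputable def Fuv (F : MvPolynomial (Fin 3) ℝ) : MvPolynomial (Fin 3) ℝ :=
  pderiv 0 (pderiv 1 F)
noncomputable def Fvv (F : MvPolynomial (Fin 3) ℝ) : MvPolynomial (Fin 3) ℝ :=
  pderiv 1 (pderiv 1 F)
noncomputable def Acal (F : MvPolynomial (Fin 3) ℝ) : MvPolynomial (Fin 3) ℝ :=
  -(X 0 * Fuu F) - X 1 * Fuv F
noncomputable def Bcal (F : MvPolynomial (Fin 3) ℝ) : MvPolynomial (Fin 3) ℝ :=
  -(X 0 * Fuv F) - X 1 * Fvv F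
noncomputable def Scal (F : MvPolynomial (Fin 3) ℝ) : MvPolynomial (Fin 3) ℝ :=
  X 0 ^ 2 * Fuu F + 2 * X 0 * X 1 * Fuv F + X 1 ^ 2 * Fvv F

/-- The homogenization of `Hess f` to degree `2n - 4`: the projective Hessian `H_f`. -/
noncomputable def Hf3 (f : MvPolynomial (Fin 2) ℝ) (n : ℕ) : MvPolynomial (Fin 3) ℝ :=
  ∑ j ∈ Finset.range (2 * n - 3),
    X 2 ^ (2 * n - 4 - j) * rename (Fin.castSucc : Fin 2 → Fin 3) (homogeneousComponent j (Hess f))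

/-! `F_vv S - B² = u² (F_uu F_vv - F_uv²)` identically in `F`. Differentiation in `u, v` commutes
with homogenization, and off the hyperplane `ω = 0` the degree-`d` homogenization of `g` takes the
value `ω^d g(u/ω, v/ω)`. So the Hessian determinant of `F` and `H_f` agree wherever `ω ≠ 0`, hence
as polynomials, and setting `u = 1` gives the identity. -/

namespace MvPolynomial

variable {σ R : Type*} [CommSemiring R]

theorem IsHomogeneous.eval_smul {φ : MvPolynomial σ R} {n : ℕ} (hφ : φ.IsHomogeneous n)
    (c : R) (x : σ → R) : eval (c • x) φ = c ^ n * eval x φ := by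
  rw [eval_eq, eval_eq, Finset.mul_sum]
  refine Finset.sum_congr rfl fun d hd => ?_
  simp_rw [Pi.smul_apply, smul_eq_mul, mul_pow, Finset.prod_mul_distrib, Finset.prod_pow_eq_pow_sum,
    ← hφ.degree_eq_sum_deg_support hd]
  ring

theorem sum_homogeneousComponent_of_totalDegree_le {φ : MvPolynomial σ R} {d : ℕ}
    (h : φ.totalDegree ≤ d) : ∑ i ∈ Finset.range (d + 1), homogeneousComponent i φ = φ := by
  rw [← Finset.sum_subset (Finset.range_subset_range.mpr (Nat.succ_le_succ h)),
    sum_homogeneousComponent]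
  intro i _ hi
  exact homogeneousComponent_eq_zero i φ (by simpa using hi)

theorem homogeneousComponent_pderiv (i : σ) (φ : MvPolynomial σ R) (j : ℕ) :
    homogeneousComponent j (pderiv i φ) = pderiv i (homogeneousComponent (j + 1) φ) := by
  ext m
  simp only [coeff_homogeneousComponent, coeff_pderiv, map_add, Finsupp.degree_single,
    Nat.add_right_cancel_iff]
  split_ifs <;> simp

theorem totalDegree_pderiv_le (i : σ) {φ : MvPolynomial σ R} {d : ℕ}
    (h : φ.totalDegree ≤ d + 1) : (pderiv i φ).totalDegree ≤ d := by
  rw [← sum_homogeneousComponent φ, map_sum]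
  refine (totalDegree_finsetSum _ _).trans (Finset.sup_le fun j hj => ?_)
  have := Finset.mem_range.mp hj
  exact ((homogeneousComponent_isHomogeneous j φ).pderiv).totalDegree_le.trans (by omega)

end MvPolynomial

theorem pderiv_castSucc_homog3 (i : Fin 2) (g : MvPolynomial (Fin 2) ℝ) (d : ℕ) :
    pderiv (Fin.castSucc i) (homog3 g (d + 1)) = homog3 (pderiv i g) d := by
  have hX : pderiv (Fin.castSucc i) (X 2 : MvPolynomial (Fin 3) ℝ) = 0 :=
    pderiv_X_of_ne (by fin_cases i <;> decide)
  simp only [homog3, map_sum, pderiv_mul, pderiv_pow, hX, pderiv_rename (Fin.castSucc_injective 2),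
    mul_zero, zero_mul, zero_add]
  rw [Finset.sum_range_succ', homogeneousComponent_zero, pderiv_C, map_zero, mul_zero, add_zero]
  refine Finset.sum_congr rfl fun j _ => ?_
  rw [homogeneousComponent_pderiv, Nat.add_sub_add_right]

theorem eval_homog3_of_ne_zero {g : MvPolynomial (Fin 2) ℝ} {d : ℕ} (hg : g.totalDegree ≤ d)
    {x : Fin 3 → ℝ} (hx : x 2 ≠ 0) :
    eval x (homog3 g d) = x 2 ^ d * eval (fun i => x (Fin.castSucc i) / x 2) g := by
  have hx' : x ∘ Fin.castSucc = x 2 • fun i => x (Fin.castSucc i) / x 2 := by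
    funext i
    simp [mul_div_cancel₀ _ hx]
  conv_rhs => rw [← sum_homogeneousComponent_of_totalDegree_le hg]
  simp only [homog3, map_sum, map_mul, map_pow, eval_X, eval_rename, hx',
    (homogeneousComponent_isHomogeneous _ g).eval_smul, Finset.mul_sum]
  refine Finset.sum_congr rfl fun j hj => ?_
  rw [← pow_sub_mul_pow (x 2) (Nat.lt_succ_iff.mp (Finset.mem_range.mp hj))]
  ring

theorem Fuu_mul_Fvv_sub_Fuv_sq_homog3 {f : MvPolynomial (Fin 2) ℝ} {m : ℕ}
    (hf : f.totalDegree ≤ m + 2) :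
    Fuu (homog3 f (m + 2)) * Fvv (homog3 f (m + 2)) - Fuv (homog3 f (m + 2)) ^ 2 =
      homog3 (Hess f) (2 * m) := by
  have hd : ∀ i j : Fin 2, (pderiv i (pderiv j f)).totalDegree ≤ m := fun i j =>
    totalDegree_pderiv_le i (totalDegree_pderiv_le j hf)
  have hHess : (Hess f).totalDegree ≤ 2 * m := by
    refine (totalDegree_sub _ _).trans (max_le ?_ ?_)
    · exact (totalDegree_mul _ _).trans (by linarith [hd 0 0, hd 1 1])
    · exact (totalDegree_pow _ _).trans (by linarith [hd 0 1])
  rw [Fuu, Fvv, Fuv, show (0 : Fin 3) = Fin.castSucc 0 from rfl,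
    show (1 : Fin 3) = Fin.castSucc 1 from rfl]
  simp only [pderiv_castSucc_homog3]
  refine funext_set (fun _ => {0}ᶜ) (fun _ => (Set.finite_singleton 0).infinite_compl)
    fun x hx => ?_
  have hx2 : x 2 ≠ 0 := hx 2 (Set.mem_univ _)
  rw [eval_homog3_of_ne_zero hHess hx2, Hess]
  simp only [map_sub, map_mul, map_pow, eval_homog3_of_ne_zero (hd _ _) hx2]
  ring

theorem Hf3_eq_homog3 (f : MvPolynomial (Fin 2) ℝ) (m : ℕ) :
    Hf3 f (m + 2) = homog3 (Hess f) (2 * m) := by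
  rw [Hf3, homog3, show 2 * (m + 2) - 3 = 2 * m + 1 by omega,
    show 2 * (m + 2) - 4 = 2 * m by omega]

theorem Fvv_mul_Scal_sub_Bcal_sq (F : MvPolynomial (Fin 3) ℝ) :
    Fvv F * Scal F - Bcal F ^ 2 = X 0 ^ 2 * (Fuu F * Fvv F - Fuv F ^ 2) := by
  rw [Scal, Bcal]
  ring

/-- The discriminant identity `F_vv·S - B² = H_f` in the affine chart `u = 1`. -/
theorem discriminant_eq_projective_hessian (n : ℕ) (hn : 3 ≤ n)
    (f : MvPolynomial (Fin 2) ℝ) (hdeg : f.totalDegree = n) :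
    ∀ v ω : ℝ,
      eval ![1, v, ω] (Fvv (homog3 f n) * Scal (homog3 f n) - (Bcal (homog3 f n)) ^ 2) =
        eval ![1, v, ω] (Hf3 f n) := by
  obtain ⟨m, rfl⟩ : ∃ m, n = m + 2 := ⟨n - 2, by omega⟩
  intro v ω
  rw [Fvv_mul_Scal_sub_Bcal_sq, Fuu_mul_Fvv_sub_Fuv_sq_homog3 hdeg.le, Hf3_eq_homog3]
  simp
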